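/- (Lemma 6, type A.) Let n ≥ 2, let e_1, …, e_n be the standard basis of ℤ^n, let Δ_+ = { e_a − e_b : 1 ≤ a < b ≤ n }, let the simple roots be α_a = e_a − e_{a+1} for 1 ≤ a ≤ n−1, and let α_max = e_1 − e_n. Then there do not exist ξ, ζ ∈ Δ_+, a nonempty set S of simple roots, and positive integers (m_s)_{s∈S} such that α_max = ξ + ζ + Σ_{s∈S} m_s·s, ξ + ζ ∉ Δ_+, and for every s ∈ S both ξ + s ∉ Δ_+ and ζ + s ∉ Δ_+. -/

import Mathlib

/-- The standard basis vector `e_a` of `ℤ^n`. -/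
def stdBasis (n : ℕ) (a : Fin n) : Fin n → ℤ := Pi.single a 1

/-- The positive roots of type `A_{n−1}` realized in `ℤ^n`:
`Δ_+ = { e_a − e_b : a < b }`. -/
def posRootsA (n : ℕ) : Set (Fin n → ℤ) :=
  {v | ∃ a b : Fin n, a < b ∧ v = stdBasis n a - stdBasis n b}

/-- The simple roots of type `A_{n−1}`: `α_a = e_a − e_{a+1}`. -/
def simpleRootsA (n : ℕ) : Set (Fin n → ℤ) :=
  {v | ∃ a b : Fin n, (b : ℕ) = (a : ℕ) + 1 ∧ v = stdBasis n a - stdBasis n b}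

/-!
Write `ξ = e_a − e_b`, `ζ = e_c − e_d` and expand everything in the simple roots: the coefficient of
`α_i` in `v` is the partial sum `v_0 + ⋯ + v_i`, so `e_a − e_b` contributes the indicator of
`[a, b)` and `α_max` the constant `1` on `[0, n − 1)`. The decomposition therefore tiles
`[0, n − 1)` by `[a, b)`, `[c, d)` and the support of the simple roots in `S`. The index just left
of `a` can lie neither in `[c, d)` (then `ξ + ζ` is a root) nor in the `S`-part (then
`ξ + α_{a−1}` is a root), so `a = 0`; likewise `c = 0`, and the two intervals overlap at `0`.
-/

open Finset

/-- The coefficient of `α_i` in a vector of coordinate sum zero. -/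
def partialSum (n i : ℕ) : (Fin n → ℤ) →+ ℤ where
  toFun v := ∑ j ∈ univ.filter (fun j : Fin n => (j : ℕ) ≤ i), v j
  map_zero' := by simp
  map_add' u v := by simp [sum_add_distrib]

theorem partialSum_stdBasis (n i : ℕ) (a : Fin n) :
    partialSum n i (stdBasis n a) = if (a : ℕ) ≤ i then 1 else 0 := by
  simp [partialSum, stdBasis, Pi.single_apply]

theorem partialSum_root {n : ℕ} (i : ℕ) {a b : Fin n} (hab : a < b) :
    partialSum n i (stdBasis n a - stdBasis n b) = if (a : ℕ) ≤ i ∧ i < b then 1 else 0 := by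
  rw [map_sub, partialSum_stdBasis, partialSum_stdBasis]
  have := Fin.lt_def.mp hab
  split_ifs <;> omega

theorem partialSum_simpleRoot {n : ℕ} (i : ℕ) {a b : Fin n} (hab : (b : ℕ) = a + 1) :
    partialSum n i (stdBasis n a - stdBasis n b) = if (a : ℕ) = i then 1 else 0 := by
  rw [partialSum_root i (Fin.lt_def.mpr (by omega))]
  split_ifs <;> omega

section SimpleRootCombination

variable {n : ℕ} {S : Finset (Fin n → ℤ)}

theorem partialSum_sum_simpleRoots_nonneg (hS : (S : Set (Fin n → ℤ)) ⊆ simpleRootsA n)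
    (m : (Fin n → ℤ) → ℕ) (i : ℕ) : 0 ≤ partialSum n i (∑ s ∈ S, (m s : ℤ) • s) := by
  rw [map_sum]
  refine sum_nonneg fun s hs => ?_
  obtain ⟨a, b, hab, rfl⟩ := hS hs
  rw [map_zsmul, partialSum_simpleRoot i hab, smul_eq_mul]
  split_ifs <;> simp

theorem exists_simpleRoot_mem_of_partialSum_ne_zero
    (hS : (S : Set (Fin n → ℤ)) ⊆ simpleRootsA n) (m : (Fin n → ℤ) → ℕ) {i : ℕ}
    (h : partialSum n i (∑ s ∈ S, (m s : ℤ) • s) ≠ 0) :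
    ∃ a b : Fin n, (a : ℕ) = i ∧ (b : ℕ) = a + 1 ∧ stdBasis n a - stdBasis n b ∈ S := by
  rw [map_sum] at h
  obtain ⟨s, hs, hne⟩ := exists_ne_zero_of_sum_ne_zero h
  obtain ⟨a, b, hab, rfl⟩ := hS hs
  rw [map_zsmul, partialSum_simpleRoot i hab] at hne
  exact ⟨a, b, by_contra fun hai => hne (by simp [hai]), hab, hs⟩

theorem add_root_mem_posRootsA {a b c : Fin n} (hab : a < b) (hca : c < a) :
    stdBasis n a - stdBasis n b + (stdBasis n c - stdBasis n a) ∈ posRootsA n := by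
  rw [add_comm, sub_add_sub_cancel]
  exact ⟨c, b, hca.trans hab, rfl⟩

theorem partialSum_eq_zero_of_succ_eq_start (hS : (S : Set (Fin n → ℤ)) ⊆ simpleRootsA n)
    (m : (Fin n → ℤ) → ℕ) {a b : Fin n} (hab : a < b)
    (hξ : ∀ s ∈ S, stdBasis n a - stdBasis n b + s ∉ posRootsA n) {i : ℕ} (hi : i + 1 = a) :
    partialSum n i (∑ s ∈ S, (m s : ℤ) • s) = 0 := by
  by_contra h
  obtain ⟨j, k, rfl, hk, hjk⟩ := exists_simpleRoot_mem_of_partialSum_ne_zero hS m h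
  obtain rfl : k = a := Fin.ext (by omega)
  exact hξ _ hjk (add_root_mem_posRootsA hab (Fin.lt_def.mpr (by omega)))

end SimpleRootCombination

theorem start_eq_zero_of_tiling {N a b c d : ℕ} {g : ℕ → ℤ} (hbN : b ≤ N) (hab : a < b)
    (hg : ∀ i, 0 ≤ g i)
    (htile : ∀ i < N,
      (if a ≤ i ∧ i < b then 1 else 0) + (if c ≤ i ∧ i < d then 1 else 0) + g i = 1)
    (hda : d ≠ a) (hgap : ∀ i, i + 1 = a → g i = 0) : a = 0 := by
  by_contra ha
  have hleft := htile (a - 1) (by omega)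
  have hstart := htile a (by omega)
  have := hg a
  have := hgap (a - 1) (by omega)
  split_ifs at hleft hstart <;> omega

theorem no_decomposition_typeA (n : ℕ) (hn : 2 ≤ n) :
    ¬ ∃ (ξ ζ : Fin n → ℤ) (S : Finset (Fin n → ℤ)) (m : (Fin n → ℤ) → ℕ),
        ξ ∈ posRootsA n ∧ ζ ∈ posRootsA n ∧
        S.Nonempty ∧ (↑S : Set (Fin n → ℤ)) ⊆ simpleRootsA n ∧ (∀ s ∈ S, 1 ≤ m s) ∧
        stdBasis n ⟨0, by omega⟩ - stdBasis n ⟨n - 1, by omega⟩ =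
          ξ + ζ + ∑ s ∈ S, (m s : ℤ) • s ∧
        ξ + ζ ∉ posRootsA n ∧
        ∀ s ∈ S, ξ + s ∉ posRootsA n ∧ ζ + s ∉ posRootsA n := by
  rintro ⟨_, _, S, m, ⟨a, b, hab, rfl⟩, ⟨c, d, hcd, rfl⟩, -, hS, -, hdecomp, hξζ, hξζS⟩
  set g := fun i => partialSum n i (∑ s ∈ S, (m s : ℤ) • s)
  have hg : ∀ i, 0 ≤ g i := partialSum_sum_simpleRoots_nonneg hS m
  have htile : ∀ i < n - 1, (if (a : ℕ) ≤ i ∧ i < b then 1 else 0) +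
      (if (c : ℕ) ≤ i ∧ i < d then 1 else 0) + g i = 1 := fun i hi => by
    have := congrArg (partialSum n i) hdecomp
    rwa [map_add, map_add, partialSum_root i hab, partialSum_root i hcd,
      partialSum_root i (Fin.mk_lt_mk.mpr (by omega)), if_pos ⟨Nat.zero_le i, hi⟩,
      eq_comm] at this
  have := Fin.lt_def.mp hab
  have := Fin.lt_def.mp hcd
  have := b.isLt
  have := d.isLt
  have hda : (d : ℕ) ≠ a := fun h => hξζ <| by
    obtain rfl : d = a := Fin.ext h
    exact add_root_mem_posRootsA hab hcd
  have hbc : (b : ℕ) ≠ c := fun h => hξζ <| by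
    obtain rfl : b = c := Fin.ext h
    rw [add_comm]
    exact add_root_mem_posRootsA hcd hab
  have ha : (a : ℕ) = 0 := start_eq_zero_of_tiling (by omega) hab hg htile hda
    fun _ => partialSum_eq_zero_of_succ_eq_start hS m hab fun s hs => (hξζS s hs).1
  have hc : (c : ℕ) = 0 := start_eq_zero_of_tiling (N := n - 1) (by omega) hcd hg
    (fun i hi => by linarith [htile i hi]) hbc
    fun _ => partialSum_eq_zero_of_succ_eq_start hS m hcd fun s hs => (hξζS s hs).2
  have h0 := htile 0 (by omega)
  rw [if_pos ⟨ha.le, by omega⟩, if_pos ⟨hc.le, by omega⟩] at h0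
  linarith [hg 0]
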